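/- Fix α > 0 and an integer p ≥ 2. For a phase parameter μ > 0 let φ^{(μ)} be the cardinal hyperbolic GB-splines with phase μ, and let φ be the polynomial cardinal B-splines; define f_p^{H_μ}(θ) := −(φ^{(μ)})̈ p ((p+1)/2) − 2·Σ_{k=1}^{⌊p/2⌋} (φ^{(μ)})̈ p ((p+1)/2 − k)·cos(kθ) and f_p(θ) := −φ̈ p ((p+1)/2) − 2·Σ_{k=1}^{⌊p/2⌋} φ̈ p ((p+1)/2 − k)·cos(kθ), where ·̈ denotes the second derivative in the argument t. Then there exist a constant C > 0 and an integer N such that for all n ≥ N: ∫_{−π}^{π} |f_p^{H_{α/n}}(θ) − f_p(θ)| dθ ≤ C · n^{−2}. -/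

import Mathlib

open Real MeasureTheory

noncomputable def fSym (φ : ℕ → ℝ → ℝ) (p : ℕ) (θ : ℝ) : ℝ :=
  -(deriv (deriv (φ p)) (((p : ℝ) + 1) / 2)) -
    2 * ∑ k ∈ Finset.Icc 1 (p / 2),
      deriv (deriv (φ p)) (((p : ℝ) + 1) / 2 - (k : ℝ)) * Real.cos ((k : ℝ) * θ)

/-! With `μ = α / n`, the degree-one hyperbolic spline is `hypProfile μ ∘ tent`, and
`hypProfile μ x = x + O(μ²)`, together with its derivative, uniformly for `x ∈ [0, 1]`.
The recursion is linear and each step integrates a difference of two shifts, so this `O(μ²)`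
gap propagates, with polynomial growth in `|t|`, to every degree. For `p ≥ 3` the second
derivative of the degree-`p` spline is a second difference of the degree-`(p - 2)` one; for
`p = 2` it is a difference of first derivatives of the degree-one spline, taken at points where
the tent is smooth. Hence `f_p^{H_μ} - f_p = O(μ²)` uniformly in `θ`, and integrating over
`[-π, π]` gives the bound `C / n²`. -/

open Set

theorem abs_fSym_sub_fSym_le {φ ψ : ℕ → ℝ → ℝ} {p : ℕ} {B : ℝ}
    (h : ∀ k ≤ p / 2, |deriv (deriv (φ p)) (((p : ℝ) + 1) / 2 - k)
      - deriv (deriv (ψ p)) (((p : ℝ) + 1) / 2 - k)| ≤ B) (θ : ℝ) :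
    |fSym φ p θ - fSym ψ p θ| ≤ (p + 1) * B := by
  set d : ℕ → ℝ := fun k => deriv (deriv (φ p)) (((p : ℝ) + 1) / 2 - k)
    - deriv (deriv (ψ p)) (((p : ℝ) + 1) / 2 - k)
  have hd0 : |d 0| ≤ B := h 0 (Nat.zero_le _)
  have hsum : |∑ k ∈ Finset.Icc 1 (p / 2), d k * cos (k * θ)| ≤ (p / 2 : ℕ) * B :=
    calc |∑ k ∈ Finset.Icc 1 (p / 2), d k * cos (k * θ)|
        ≤ ∑ k ∈ Finset.Icc 1 (p / 2), |d k * cos (k * θ)| := Finset.abs_sum_le_sum_abs _ _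
      _ ≤ ∑ _k ∈ Finset.Icc 1 (p / 2), B := by
        refine Finset.sum_le_sum fun k hk => ?_
        rw [abs_mul]
        exact (mul_le_of_le_one_right (abs_nonneg _) (abs_cos_le_one _)).trans
          (h k (Finset.mem_Icc.1 hk).2)
      _ = (p / 2 : ℕ) * B := by simp
  have hp : ((p / 2 : ℕ) : ℝ) * 2 ≤ p := by exact_mod_cast Nat.div_mul_le_self p 2
  have hdiff : fSym φ p θ - fSym ψ p θ
      = -d 0 - 2 * ∑ k ∈ Finset.Icc 1 (p / 2), d k * cos (k * θ) := by
    simp only [fSym, d, sub_mul, Finset.sum_sub_distrib, Nat.cast_zero, sub_zero]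
    ring
  rw [hdiff]
  calc |-d 0 - 2 * ∑ k ∈ Finset.Icc 1 (p / 2), d k * cos (k * θ)|
      ≤ |d 0| + 2 * |∑ k ∈ Finset.Icc 1 (p / 2), d k * cos (k * θ)| := by
        refine (abs_sub _ _).trans ?_
        rw [abs_neg, abs_mul, abs_two]
    _ ≤ B + 2 * ((p / 2 : ℕ) * B) := by gcongr
    _ ≤ (p + 1) * B := by nlinarith [(abs_nonneg _).trans hd0]

theorem sq_div_two_le_cosh_sub_one (x : ℝ) : x ^ 2 / 2 ≤ cosh x - 1 := by
  rw [← cosh_abs, ← sq_abs]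
  have hs : |x| / 2 ≤ sinh (|x| / 2) := self_le_sinh_iff.2 (by positivity)
  have h : cosh |x| = cosh (2 * (|x| / 2)) := by ring_nf
  rw [h, cosh_two_mul, cosh_sq]
  nlinarith [abs_nonneg x]

theorem cosh_sub_one_le {x : ℝ} (hx : |x| ≤ 1) : cosh x - 1 ≤ x ^ 2 / 2 + x ^ 4 / 4 := by
  have hy : |x ^ 2 / 2| ≤ 1 := by
    rw [abs_of_nonneg (by positivity)]
    nlinarith [sq_abs x, abs_nonneg x]
  have h := (abs_le.1 (abs_exp_sub_one_sub_id_le hy)).2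
  have := cosh_le_exp_half_sq x
  nlinarith

/-- The degree-one hyperbolic GB-spline of phase `μ` is `hypProfile μ ∘ tent`. -/
noncomputable def hypProfile (μ x : ℝ) : ℝ := μ / (2 * (cosh μ - 1)) * sinh (μ * x)

theorem hasDerivAt_hypProfile (μ x : ℝ) :
    HasDerivAt (hypProfile μ) (μ / (2 * (cosh μ - 1)) * (μ * cosh (μ * x))) x := by
  have h := ((hasDerivAt_id' x).const_mul μ).sinh.const_mul (μ / (2 * (cosh μ - 1)))
  rw [mul_one, mul_comm (cosh _)] at h
  exact h

theorem continuous_hypProfile (μ : ℝ) : Continuous (hypProfile μ) :=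
  continuous_iff_continuousAt.2 fun x => (hasDerivAt_hypProfile μ x).continuousAt

theorem abs_deriv_hypProfile_sub_one_le {μ y : ℝ} (hμ0 : 0 < μ) (hμ1 : μ ≤ 1)
    (hy : y ∈ Icc (0 : ℝ) 1) :
    |μ / (2 * (cosh μ - 1)) * (μ * cosh (μ * y)) - 1| ≤ μ ^ 2 := by
  have hD : μ ^ 2 ≤ 2 * (cosh μ - 1) := by linarith [sq_div_two_le_cosh_sub_one μ]
  have hDpos : 0 < 2 * (cosh μ - 1) := (by positivity : (0 : ℝ) < μ ^ 2).trans_le hD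
  have hcosh : cosh (μ * y) ≤ cosh μ := by
    rw [cosh_le_cosh, abs_of_pos hμ0, abs_of_nonneg (by nlinarith [hy.1])]
    nlinarith [hy.2]
  have hup := cosh_sub_one_le (x := μ) (by rwa [abs_of_pos hμ0])
  have hμ2 : μ ^ 2 ≤ 1 := by nlinarith
  have hnum : |μ ^ 2 * (cosh (μ * y) - 1) - (2 * (cosh μ - 1) - μ ^ 2)| ≤ μ ^ 4 := by
    have h1 : 0 ≤ cosh (μ * y) - 1 := by linarith [one_le_cosh (μ * y)]
    rw [abs_le]
    constructor <;> nlinarith [pow_pos hμ0 4]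
  calc |μ / (2 * (cosh μ - 1)) * (μ * cosh (μ * y)) - 1|
      = |μ ^ 2 * (cosh (μ * y) - 1) - (2 * (cosh μ - 1) - μ ^ 2)| / (2 * (cosh μ - 1)) := by
        rw [← abs_of_pos hDpos, ← abs_div, abs_of_pos hDpos]
        have hne : cosh μ - 1 ≠ 0 := by linarith
        congr 1
        field_simp
        ring
    _ ≤ μ ^ 4 / μ ^ 2 := by gcongr
    _ = μ ^ 2 := by field_simp

theorem abs_hypProfile_sub_le {μ y : ℝ} (hμ0 : 0 < μ) (hμ1 : μ ≤ 1) (hy : y ∈ Icc (0 : ℝ) 1) :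
    |hypProfile μ y - y| ≤ μ ^ 2 := by
  have hmvt := norm_image_sub_le_of_norm_deriv_le_segment' (a := 0) (b := 1)
    (f := fun x => hypProfile μ x - x) (C := μ ^ 2)
    (fun x _ => ((hasDerivAt_hypProfile μ x).sub (hasDerivAt_id x)).hasDerivWithinAt)
    (fun x hx => abs_deriv_hypProfile_sub_one_le hμ0 hμ1 (Ico_subset_Icc_self hx)) y hy
  simp only [hypProfile, mul_zero, sinh_zero, sub_zero, Real.norm_eq_abs] at hmvt
  exact hmvt.trans (by nlinarith [hy.2, sq_nonneg μ])

def tent (t : ℝ) : ℝ := max 0 (min t (2 - t))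

theorem tent_mem_Icc (t : ℝ) : tent t ∈ Icc (0 : ℝ) 1 := by
  refine ⟨le_max_left _ _, max_le zero_le_one ?_⟩
  rcases le_total t 1 with h | h
  · exact (min_le_left _ _).trans h
  · exact (min_le_right _ _).trans (by linarith)

theorem lipschitzWith_tent : LipschitzWith 1 tent := by
  have h := (LipschitzWith.id.min ((LipschitzWith.const (2 : ℝ)).sub LipschitzWith.id)).const_max 0
  rw [show tent = fun t => max 0 (min t (2 - t)) from rfl]
  simpa using h

theorem continuous_tent : Continuous tent := lipschitzWith_tent.continuous

theorem ite_eq_comp_tent (f : ℝ → ℝ) (hf : f 0 = 0) (t : ℝ) :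
    (if 0 ≤ t ∧ t < 1 then f t else if 1 ≤ t ∧ t < 2 then f (2 - t) else 0) = f (tent t) := by
  unfold tent
  split_ifs with h₁ h₂
  · rw [min_eq_left (by linarith), max_eq_right h₁.1]
  · rw [min_eq_right (by linarith), max_eq_right (by linarith)]
  · rcases lt_or_ge t 0 with ht | ht
    · rw [min_eq_left (by linarith), max_eq_left ht.le, hf]
    · have : 2 ≤ t := by grind
      rw [min_eq_right (by linarith), max_eq_left (by linarith), hf]

theorem differentiableAt_tent {x : ℝ} (h₀ : x ≠ 0) (h₁ : x ≠ 1) (h₂ : x ≠ 2) :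
    DifferentiableAt ℝ tent x := by
  rcases h₀.lt_or_gt with hx | hx
  · refine (differentiableAt_const (0 : ℝ)).congr_of_eventuallyEq ?_
    filter_upwards [Iio_mem_nhds hx] with u hu
    simp only [tent, mem_Iio] at hu ⊢
    rw [min_eq_left (by linarith), max_eq_left hu.le]
  rcases h₁.lt_or_gt with hx' | hx'
  · refine differentiableAt_id.congr_of_eventuallyEq ?_
    filter_upwards [Ioo_mem_nhds hx hx'] with u hu
    simp only [tent, mem_Ioo, id] at hu ⊢
    rw [min_eq_left (by linarith), max_eq_right hu.1.le]
  rcases h₂.lt_or_gt with hx'' | hx''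
  · refine ((differentiableAt_const (2 : ℝ)).sub differentiableAt_id).congr_of_eventuallyEq ?_
    filter_upwards [Ioo_mem_nhds hx' hx''] with u hu
    simp only [tent, mem_Ioo, Pi.sub_apply, id] at hu ⊢
    rw [min_eq_right (by linarith), max_eq_right (by linarith)]
  · refine (differentiableAt_const (0 : ℝ)).congr_of_eventuallyEq ?_
    filter_upwards [Ioi_mem_nhds hx''] with u hu
    simp only [tent, mem_Ioi] at hu ⊢
    rw [min_eq_right (by linarith), max_eq_left (by linarith)]

theorem abs_deriv_tent_le (x : ℝ) : |deriv tent x| ≤ 1 := by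
  simpa using norm_deriv_le_of_lipschitz lipschitzWith_tent (x₀ := x)

def SatisfiesSplineRecursion (G : ℕ → ℝ → ℝ) : Prop :=
  ∀ q : ℕ, 2 ≤ q → ∀ t : ℝ, G q t = ∫ s in (0 : ℝ)..t, (G (q - 1) s - G (q - 1) (s - 1))

namespace SatisfiesSplineRecursion

variable {G H : ℕ → ℝ → ℝ}

theorem eq_integral (hG : SatisfiesSplineRecursion G) (k : ℕ) (t : ℝ) :
    G (k + 2) t = ∫ s in (0 : ℝ)..t, (G (k + 1) s - G (k + 1) (s - 1)) :=
  hG (k + 2) (by omega) t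

theorem hasDerivAt_of_continuous (hG : SatisfiesSplineRecursion G) {k : ℕ}
    (hc : Continuous (G (k + 1))) (t : ℝ) :
    HasDerivAt (G (k + 2)) (G (k + 1) t - G (k + 1) (t - 1)) t := by
  rw [funext (hG.eq_integral k)]
  exact ((hc.sub (hc.comp (continuous_sub_right 1))).integral_hasStrictDerivAt 0 t).hasDerivAt

theorem continuous (hG : SatisfiesSplineRecursion G) (hG1 : Continuous (G 1)) :
    ∀ k : ℕ, Continuous (G (k + 1))
  | 0 => hG1
  | k + 1 => continuous_iff_continuousAt.2 fun t =>
      (hG.hasDerivAt_of_continuous (hG.continuous hG1 k) t).continuousAt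

theorem hasDerivAt (hG : SatisfiesSplineRecursion G) (hG1 : Continuous (G 1)) (k : ℕ) (t : ℝ) :
    HasDerivAt (G (k + 2)) (G (k + 1) t - G (k + 1) (t - 1)) t :=
  hG.hasDerivAt_of_continuous (hG.continuous hG1 k) t

theorem deriv_eq (hG : SatisfiesSplineRecursion G) (hG1 : Continuous (G 1)) (k : ℕ) :
    deriv (G (k + 2)) = fun t => G (k + 1) t - G (k + 1) (t - 1) :=
  funext fun t => (hG.hasDerivAt hG1 k t).deriv

theorem deriv_deriv_two (hG : SatisfiesSplineRecursion G) (hG1 : Continuous (G 1)) {t : ℝ}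
    (ht : DifferentiableAt ℝ (G 1) t) (ht' : DifferentiableAt ℝ (G 1) (t - 1)) :
    deriv (deriv (G 2)) t = deriv (G 1) t - deriv (G 1) (t - 1) := by
  rw [hG.deriv_eq hG1 0]
  exact (ht.hasDerivAt.sub (ht'.hasDerivAt.comp_sub_const t 1)).deriv

theorem deriv_deriv_add_three (hG : SatisfiesSplineRecursion G) (hG1 : Continuous (G 1))
    (k : ℕ) (t : ℝ) :
    deriv (deriv (G (k + 3))) t = G (k + 1) t - 2 * G (k + 1) (t - 1) + G (k + 1) (t - 2) :=
  calc deriv (deriv (G (k + 3))) t = deriv (fun u => G (k + 2) u - G (k + 2) (u - 1)) t := by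
        rw [hG.deriv_eq hG1 (k + 1)]
    _ = G (k + 1) t - G (k + 1) (t - 1) - (G (k + 1) (t - 1) - G (k + 1) (t - 1 - 1)) :=
        ((hG.hasDerivAt hG1 k t).sub ((hG.hasDerivAt hG1 k (t - 1)).comp_sub_const t 1)).deriv
    _ = G (k + 1) t - 2 * G (k + 1) (t - 1) + G (k + 1) (t - 2) := by ring_nf

theorem sub (hG : SatisfiesSplineRecursion G) (hH : SatisfiesSplineRecursion H)
    (hG1 : Continuous (G 1)) (hH1 : Continuous (H 1)) : SatisfiesSplineRecursion (G - H) := by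
  intro q hq t
  obtain ⟨k, rfl⟩ : ∃ k, q = k + 2 := ⟨q - 2, by omega⟩
  have hGc := hG.continuous hG1 k
  have hHc := hH.continuous hH1 k
  calc (G - H) (k + 2) t
      = (∫ s in (0 : ℝ)..t, (G (k + 1) s - G (k + 1) (s - 1)))
        - ∫ s in (0 : ℝ)..t, (H (k + 1) s - H (k + 1) (s - 1)) := by
        rw [Pi.sub_apply, Pi.sub_apply, hG.eq_integral, hH.eq_integral]
    _ = ∫ s in (0 : ℝ)..t,
          ((G (k + 1) s - G (k + 1) (s - 1)) - (H (k + 1) s - H (k + 1) (s - 1))) :=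
        (intervalIntegral.integral_sub
          ((hGc.sub (hGc.comp (continuous_sub_right 1))).intervalIntegrable _ _)
          ((hHc.sub (hHc.comp (continuous_sub_right 1))).intervalIntegrable _ _)).symm
    _ = ∫ s in (0 : ℝ)..t, ((G - H) (k + 1) s - (G - H) (k + 1) (s - 1)) := by
        congr 1 with s
        simp only [Pi.sub_apply]
        ring

theorem abs_le (hG : SatisfiesSplineRecursion G) {ε : ℝ} (hε : ∀ t, |G 1 t| ≤ ε) :
    ∀ (k : ℕ) (t : ℝ), |G (k + 1) t| ≤ ε * (2 * (|t| + k)) ^ k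
  | 0, t => by simpa using hε t
  | k + 1, t => by
    have hε0 : 0 ≤ ε := (abs_nonneg _).trans (hε 0)
    set B := ε * (2 * (|t| + (k + 1 : ℕ))) ^ k
    have hprev : ∀ s, |s| ≤ |t| + 1 → |G (k + 1) s| ≤ B := by
      intro s hs
      have hbase : 2 * (|s| + (k : ℝ)) ≤ 2 * (|t| + (k + 1 : ℕ)) := by push_cast; linarith
      exact (hG.abs_le hε k s).trans
        (mul_le_mul_of_nonneg_left (pow_le_pow_left₀ (by positivity) hbase k) hε0)
    have hbound : ∀ s ∈ uIoc (0 : ℝ) t, ‖G (k + 1) s - G (k + 1) (s - 1)‖ ≤ 2 * B := by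
      intro s hs
      have hst : |s| ≤ |t| := by simpa using abs_sub_left_of_mem_uIcc (uIoc_subset_uIcc hs)
      rw [Real.norm_eq_abs, two_mul]
      refine (abs_sub _ _).trans (add_le_add (hprev s (by linarith)) (hprev (s - 1) ?_))
      linarith [abs_sub s (1 : ℝ), abs_one (α := ℝ)]
    have hI := intervalIntegral.norm_integral_le_of_norm_le_const hbound
    rw [← hG.eq_integral, Real.norm_eq_abs, sub_zero] at hI
    refine hI.trans ?_
    have ht : 2 * |t| ≤ 2 * (|t| + (k + 1 : ℕ)) := by push_cast; linarith
    calc 2 * B * |t| = B * (2 * |t|) := by ring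
      _ ≤ B * (2 * (|t| + (k + 1 : ℕ))) := by gcongr
      _ = ε * (2 * (|t| + (k + 1 : ℕ))) ^ (k + 1) := by ring

end SatisfiesSplineRecursion
theorem abs_deriv_hypProfile_comp_tent_sub_le {μ x : ℝ} (hμ0 : 0 < μ) (hμ1 : μ ≤ 1)
    (hx : DifferentiableAt ℝ tent x) :
    |deriv (hypProfile μ ∘ tent) x - deriv tent x| ≤ μ ^ 2 := by
  rw [((hasDerivAt_hypProfile μ (tent x)).comp x hx.hasDerivAt).deriv, ← sub_one_mul, abs_mul]
  exact (mul_le_of_le_one_right (abs_nonneg _) (abs_deriv_tent_le x)).trans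
    (abs_deriv_hypProfile_sub_one_le hμ0 hμ1 (tent_mem_Icc x))

section HyperbolicVsPolynomial

variable {μ : ℝ} {G ψ : ℕ → ℝ → ℝ} (hμ0 : 0 < μ) (hμ1 : μ ≤ 1)
  (hG : SatisfiesSplineRecursion G) (hG1 : G 1 = hypProfile μ ∘ tent)
  (hψ : SatisfiesSplineRecursion ψ) (hψ1 : ψ 1 = tent)
include hμ0 hμ1 hG hG1 hψ hψ1

theorem abs_deriv_deriv_two_sub_le {t : ℝ} (ht : DifferentiableAt ℝ tent t)
    (ht' : DifferentiableAt ℝ tent (t - 1)) :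
    |deriv (deriv (G 2)) t - deriv (deriv (ψ 2)) t| ≤ 2 * μ ^ 2 := by
  have hGd : ∀ x, DifferentiableAt ℝ tent x → DifferentiableAt ℝ (G 1) x := fun x hx => by
    rw [hG1]
    exact (hasDerivAt_hypProfile μ _).differentiableAt.comp x hx
  rw [hG.deriv_deriv_two (hG1 ▸ (continuous_hypProfile μ).comp continuous_tent) (hGd t ht)
      (hGd _ ht'), hψ.deriv_deriv_two (hψ1 ▸ continuous_tent) (hψ1 ▸ ht) (hψ1 ▸ ht'), hG1, hψ1]
  calc |deriv (hypProfile μ ∘ tent) t - deriv (hypProfile μ ∘ tent) (t - 1)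
        - (deriv tent t - deriv tent (t - 1))|
      = |(deriv (hypProfile μ ∘ tent) t - deriv tent t)
        - (deriv (hypProfile μ ∘ tent) (t - 1) - deriv tent (t - 1))| := by ring_nf
    _ ≤ μ ^ 2 + μ ^ 2 := (abs_sub _ _).trans (add_le_add
        (abs_deriv_hypProfile_comp_tent_sub_le hμ0 hμ1 ht)
        (abs_deriv_hypProfile_comp_tent_sub_le hμ0 hμ1 ht'))
    _ = 2 * μ ^ 2 := by ring

theorem abs_deriv_deriv_add_three_sub_le (k : ℕ) (t : ℝ) :
    |deriv (deriv (G (k + 3))) t - deriv (deriv (ψ (k + 3))) t|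
      ≤ 4 * (μ ^ 2 * (2 * (|t| + 2 + k)) ^ k) := by
  have hGc : Continuous (G 1) := hG1 ▸ (continuous_hypProfile μ).comp continuous_tent
  have hψc : Continuous (ψ 1) := hψ1 ▸ continuous_tent
  have hD := (hG.sub hψ hGc hψc).abs_le (ε := μ ^ 2) (fun s => by
    simpa [hG1, hψ1] using abs_hypProfile_sub_le hμ0 hμ1 (tent_mem_Icc s)) k
  set B := μ ^ 2 * (2 * (|t| + 2 + k)) ^ k
  have hB : ∀ s, |s| ≤ |t| + 2 → |G (k + 1) s - ψ (k + 1) s| ≤ B := fun s hs =>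
    (hD s).trans (mul_le_mul_of_nonneg_left
      (pow_le_pow_left₀ (by positivity) (by linarith) k) (sq_nonneg μ))
  rw [hG.deriv_deriv_add_three hGc, hψ.deriv_deriv_add_three hψc]
  calc |G (k + 1) t - 2 * G (k + 1) (t - 1) + G (k + 1) (t - 2)
        - (ψ (k + 1) t - 2 * ψ (k + 1) (t - 1) + ψ (k + 1) (t - 2))|
      = |(G (k + 1) t - ψ (k + 1) t) - 2 * (G (k + 1) (t - 1) - ψ (k + 1) (t - 1))
        + (G (k + 1) (t - 2) - ψ (k + 1) (t - 2))| := by ring_nf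
    _ ≤ |G (k + 1) t - ψ (k + 1) t| + 2 * |G (k + 1) (t - 1) - ψ (k + 1) (t - 1)|
        + |G (k + 1) (t - 2) - ψ (k + 1) (t - 2)| := by
      refine (abs_add_le _ _).trans (add_le_add_left ((abs_sub _ _).trans ?_) _)
      rw [abs_mul, abs_two]
    _ ≤ B + 2 * B + B := by
      gcongr
      · exact hB t (by linarith)
      · exact hB _ (by linarith [abs_sub t (1 : ℝ), abs_one (α := ℝ)])
      · exact hB _ (by linarith [abs_sub t (2 : ℝ), abs_two (α := ℝ)])
    _ = 4 * B := by ring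

theorem abs_deriv_deriv_sub_le {p k : ℕ} (hp : 2 ≤ p) (hk : k ≤ p / 2) :
    |deriv (deriv (G p)) (((p : ℝ) + 1) / 2 - k) - deriv (deriv (ψ p)) (((p : ℝ) + 1) / 2 - k)|
      ≤ 4 * (4 * p) ^ p * μ ^ 2 := by
  rcases hp.eq_or_lt with rfl | hp3
  · interval_cases k
    all_goals
      refine (abs_deriv_deriv_two_sub_le hμ0 hμ1 hG hG1 hψ hψ1
        (differentiableAt_tent ?_ ?_ ?_) (differentiableAt_tent ?_ ?_ ?_)).trans ?_
      all_goals norm_num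
    all_goals nlinarith [sq_nonneg μ]
  obtain ⟨j, rfl⟩ : ∃ j, p = j + 3 := ⟨p - 3, by omega⟩
  have hk2 : (k : ℝ) * 2 ≤ (j + 3 : ℕ) := by exact_mod_cast (Nat.le_div_iff_mul_le two_pos).1 hk
  have ht : |((j + 3 : ℕ) + 1 : ℝ) / 2 - k| ≤ (j + 3 : ℕ) := by
    rw [abs_le]; push_cast at hk2 ⊢; constructor <;> linarith [(k.cast_nonneg : (0 : ℝ) ≤ k)]
  have hbase : 2 * (|((j + 3 : ℕ) + 1 : ℝ) / 2 - k| + 2 + j) ≤ 4 * (j + 3 : ℕ) := by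
    push_cast at ht ⊢; linarith
  refine (abs_deriv_deriv_add_three_sub_le hμ0 hμ1 hG hG1 hψ hψ1 j _).trans ?_
  calc 4 * (μ ^ 2 * (2 * (|((j + 3 : ℕ) + 1 : ℝ) / 2 - k| + 2 + j)) ^ j)
      ≤ 4 * (μ ^ 2 * (4 * (j + 3 : ℕ)) ^ j) := by gcongr
    _ ≤ 4 * (μ ^ 2 * (4 * (j + 3 : ℕ)) ^ (j + 3)) := by
      gcongr
      · push_cast; linarith
      · omega
    _ = 4 * (4 * (j + 3 : ℕ)) ^ (j + 3) * μ ^ 2 := by ring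

end HyperbolicVsPolynomial

theorem fSym_hyp_L1_convergence (α : ℝ) (hα : 0 < α) (p : ℕ) (hp : 2 ≤ p)
    (Φ : ℝ → ℕ → ℝ → ℝ)
    (hΦ1 : ∀ μ : ℝ, 0 < μ → ∀ t : ℝ, Φ μ 1 t =
      if 0 ≤ t ∧ t < 1 then μ / (2 * (Real.cosh μ - 1)) * Real.sinh (μ * t)
      else if 1 ≤ t ∧ t < 2 then μ / (2 * (Real.cosh μ - 1)) * Real.sinh (μ * (2 - t))
      else 0)
    (hΦrec : ∀ μ : ℝ, 0 < μ → ∀ q : ℕ, 2 ≤ q → ∀ t : ℝ,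
      Φ μ q t = ∫ s in (0:ℝ)..t, (Φ μ (q - 1) s - Φ μ (q - 1) (s - 1)))
    (ψ : ℕ → ℝ → ℝ)
    (hψ1 : ∀ t : ℝ, ψ 1 t =
      if 0 ≤ t ∧ t < 1 then t
      else if 1 ≤ t ∧ t < 2 then 2 - t
      else 0)
    (hψrec : ∀ q : ℕ, 2 ≤ q → ∀ t : ℝ,
      ψ q t = ∫ s in (0:ℝ)..t, (ψ (q - 1) s - ψ (q - 1) (s - 1))) :
    ∃ C : ℝ, 0 < C ∧ ∃ N : ℕ, 1 ≤ N ∧ ∀ n : ℕ, N ≤ n →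
      (∫ θ in (-Real.pi)..Real.pi, |fSym (Φ (α / n)) p θ - fSym ψ p θ|) ≤ C / (n : ℝ) ^ 2 := by
  set M : ℝ := (p + 1) * (4 * (4 * p) ^ p)
  have hψtent : ψ 1 = tent := funext fun t => (hψ1 t).trans (ite_eq_comp_tent id rfl t)
  refine ⟨2 * π * M * α ^ 2, by positivity, max 1 ⌈α⌉₊, le_max_left _ _, fun n hn => ?_⟩
  have hn0 : (0 : ℝ) < n := by exact_mod_cast (le_max_left _ _).trans hn
  have hμ0 : 0 < α / n := div_pos hα hn0
  have hμ1 : α / n ≤ 1 := (div_le_one hn0).2 <|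
    (Nat.le_ceil α).trans (by exact_mod_cast (le_max_right _ _).trans hn)
  have hΦtent : Φ (α / n) 1 = hypProfile (α / n) ∘ tent := funext fun t =>
    (hΦ1 _ hμ0 t).trans (ite_eq_comp_tent (hypProfile (α / n)) (by simp [hypProfile]) t)
  have hbound (θ : ℝ) : ‖|fSym (Φ (α / n)) p θ - fSym ψ p θ|‖ ≤ M * (α / n) ^ 2 := by
    rw [Real.norm_eq_abs, abs_abs, mul_assoc]
    exact abs_fSym_sub_fSym_le (fun k hk => abs_deriv_deriv_sub_le hμ0 hμ1 (hΦrec _ hμ0) hΦtent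
      hψrec hψtent hp hk) θ
  calc (∫ θ in (-π)..π, |fSym (Φ (α / n)) p θ - fSym ψ p θ|)
      ≤ M * (α / n) ^ 2 * |π - -π| :=
        (le_abs_self _).trans
          (intervalIntegral.norm_integral_le_of_norm_le_const fun θ _ => hbound θ)
    _ = 2 * π * M * α ^ 2 / (n : ℝ) ^ 2 := by
      rw [abs_of_pos (by linarith [pi_pos])]
      field_simp
      ring
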